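/- arXiv:0806.3559 — 5 statements merged into one kernel-verified Lean document; each statement's English description precedes it below -/
import Mathlib

section
/- Let Ω be a nonempty countable set equipped with the σ-algebra of all subsets, let ρ be a probability measure on Ω, and let μ = ⊗ρ be the infinite product measure on Ω^ℕ (with the product σ-algebra). Then the set of simply normal sequences, i.e. the set of w = (a_i)_{i∈ℕ} ∈ Ω^ℕ such that for every r ∈ Ω the relative frequency (1/n)·#{i : 1 ≤ i ≤ n, a_i = r} converges to ρ({r}) as n → ∞, has μ-measure 1. -/
/-!
The finite-dimensional marginals determine a measure on `ℕ → Ω`, so `μ` is the product measure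
`Measure.infinitePi fun _ => ρ`, under which the coordinates are i.i.d. with law `ρ`. For a fixed
`r`, the indicators of `w i = r` are then i.i.d. and integrable with mean `ρ {r}`, and the strong
law of large numbers makes their averages, the frequencies of `r`, converge almost surely.
Countably many null sets, one for each `r`, have a null union.
-/

open MeasureTheory Filter

open Finset in
theorem Set.ncard_setOf_lt_and (p : ℕ → Prop) [DecidablePred p] (n : ℕ) :
    ({i | i < n ∧ p i} : Set ℕ).ncard = #{i ∈ Finset.range n | p i} := by
  rw [← Set.ncard_coe_finset]
  congr 1
  ext i
  simp

namespace MeasureTheory.Measure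

variable {α : Type*} [MeasurableSpace α] (ρ : Measure α) [IsProbabilityMeasure ρ]

open Finset in
theorem eq_infinitePi_of_map_fin_eq_pi (μ : Measure (ℕ → α))
    (hμ : ∀ n : ℕ, μ.map (fun w (i : Fin n) => w i) = Measure.pi fun _ => ρ) :
    μ = infinitePi fun _ => ρ := by
  refine eq_infinitePi _ fun s t ht => ?_
  obtain ⟨n, hsn⟩ : ∃ n, s ⊆ range n := ⟨s.sup id + 1, fun i hi =>
    mem_range.mpr (Nat.lt_succ_of_le (le_sup (f := id) hi))⟩
  have hcyl : Set.pi s t = (fun w (i : Fin n) => w i) ⁻¹'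
      Set.univ.pi fun i : Fin n => if (i : ℕ) ∈ s then t i else Set.univ := by
    ext w
    simp only [Set.mem_pi, Set.mem_preimage, Set.mem_univ, forall_const, mem_coe]
    refine ⟨fun h i => ?_, fun h i hi => ?_⟩
    · split_ifs with hi
      exacts [h i hi, trivial]
    · simpa [hi] using h ⟨i, mem_range.mp (hsn hi)⟩
  rw [hcyl, ← map_apply (by fun_prop) (.univ_pi fun i => by split_ifs; exacts [ht i, .univ]),
    hμ, pi_pi]
  simp only [apply_ite ρ, measure_univ]
  rw [Fin.prod_univ_eq_prod_range (fun i => if i ∈ s then ρ (t i) else 1), prod_ite_mem,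
    inter_eq_right.mpr hsn]

open ProbabilityTheory Finset in
theorem ae_tendsto_frequency_infinitePi {s : Set α} (hs : MeasurableSet s) :
    ∀ᵐ w ∂(infinitePi fun _ : ℕ => ρ), Tendsto
      (fun n : ℕ => (({i | i < n ∧ w i ∈ s} : Set ℕ).ncard : ℝ) / n) atTop (nhds (ρ.real s)) := by
  classical
  set f : α → ℝ := s.indicator 1
  have hf : Measurable f := measurable_one.indicator hs
  let X : ℕ → (ℕ → α) → ℝ := fun i w => f (w i)
  have hmap (i : ℕ) : (infinitePi fun _ : ℕ => ρ).map (X i) = ρ.map f := by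
    change map (f ∘ fun w : ℕ → α => w i) _ = _
    rw [← map_map hf (measurable_pi_apply i), infinitePi_map_eval]
  have hindep : Pairwise fun i j => X i ⟂ᵢ[infinitePi fun _ => ρ] X j := fun i j hij =>
    (iIndepFun_infinitePi (X := fun _ => f) fun _ => hf).indepFun hij
  have hident (i : ℕ) : IdentDistrib (X i) (X 0) (infinitePi fun _ => ρ) (infinitePi fun _ => ρ) :=
    ⟨(hf.comp (measurable_pi_apply i)).aemeasurable,
      (hf.comp (measurable_pi_apply 0)).aemeasurable, by rw [hmap, hmap]⟩
  have hint : Integrable (X 0) (infinitePi fun _ => ρ) :=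
    ((integrable_const 1).indicator hs).comp_measurable (measurable_pi_apply 0)
  have hmean : (infinitePi fun _ : ℕ => ρ)[X 0] = ρ.real s := by
    rw [← integral_map (measurable_pi_apply 0).aemeasurable hf.aestronglyMeasurable,
      infinitePi_map_eval, integral_indicator_one hs]
  filter_upwards [strong_law_ae_real X hint hindep hident] with w hw
  rw [hmean] at hw
  refine hw.congr fun n => ?_
  rw [Set.ncard_setOf_lt_and, ← sum_boole]
  rfl

end MeasureTheory.Measure

theorem simply_normal_full_measure_general
    {Ω : Type*} [Countable Ω] [m : MeasurableSpace Ω] (hm : m = ⊤)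
    (ρ : Measure Ω) [IsProbabilityMeasure ρ]
    (μ : Measure (ℕ → Ω))
    (hμ : ∀ n : ℕ, Measure.map (fun w (i : Fin n) => w (i : ℕ)) μ
        = Measure.pi (fun _ : Fin n => ρ)) :
    μ {w : ℕ → Ω | ∀ r : Ω,
        Tendsto (fun n : ℕ => (({i | i < n ∧ w i = r} : Set ℕ).ncard : ℝ) / n)
          atTop (nhds (ρ {r}).toReal)} = 1 := by
  have hr (r : Ω) : MeasurableSet {r} := hm ▸ MeasurableSpace.measurableSet_top
  rw [Measure.eq_infinitePi_of_map_fin_eq_pi ρ μ hμ]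
  refine (measure_congr (ae_eq_univ.mpr ?_)).trans measure_univ
  -- the ascription elaborates the lemma before unifying `w i ∈ {r}` with `w i = r`
  exact ae_all_iff.mpr fun r => (Measure.ae_tendsto_frequency_infinitePi ρ (hr r) :)

/-- Let `Ω` be a nonempty countable set equipped with the σ-algebra of all
subsets, let `ρ` be a probability measure on `Ω`, and let `μ = ⊗ρ` be the infinite product
measure on `Ω^ℕ` (characterized by its finite-dimensional marginals being the finite
product measures `ρ^n`).  Then the set of simply normal sequences has `μ`-measure `1`. -/
theorem simply_normal_full_measure
    {Ω : Type*} [Nonempty Ω] [Countable Ω] [m : MeasurableSpace Ω] (hm : m = ⊤)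
    (ρ : Measure Ω) [IsProbabilityMeasure ρ]
    (μ : Measure (ℕ → Ω)) [IsProbabilityMeasure μ]
    (hμ : ∀ n : ℕ, Measure.map (fun w (i : Fin n) => w (i : ℕ)) μ
        = Measure.pi (fun _ : Fin n => ρ)) :
    μ {w : ℕ → Ω | ∀ r : Ω,
        Tendsto (fun n : ℕ => (({i | i < n ∧ w i = r} : Set ℕ).ncard : ℝ) / n)
          atTop (nhds (ρ {r}).toReal)} = 1 :=
  simply_normal_full_measure_general (m := m) hm ρ μ hμ
end

section
/- Let Ω be a nonempty countable set equipped with the σ-algebra of all subsets, let ρ be a probability measure on Ω, and let μ = ⊗ρ be the infinite product measure on Ω^ℕ (with the product σ-algebra). Then the set of normal sequences, i.e. the set of w = (a_i)_{i∈ℕ} ∈ Ω^ℕ such that for every k ∈ ℕ and every word B_k = b_1…b_k ∈ Ω^k the relative frequency (1/n)·#{i : 1 ≤ i ≤ n, a_{i+j-1} = b_j for all j = 1,…,k} converges to ∏_{j=1}^k ρ({b_j}) as n → ∞, has μ-measure 1. -/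
/-!
Under `μ` the coordinates are i.i.d. with law `ρ`, i.e. `μ` is the infinite product `⊗ρ`. For a
word `b` of length `k`, the indicator that the window `w i, …, w (i + k - 1)` spells `b` is a
`k`-dependent sequence: windows starting `k + 1` apart are disjoint, so along each residue class
modulo `k + 1` the indicators are i.i.d. and the strong law of large numbers applies. Averaging the
`k + 1` residue classes gives the frequency of `b`, almost surely. There are countably many words.
-/

open MeasureTheory Filter Finset ProbabilityTheory Topology

section ResidueClasses

variable {d : ℕ}

lemma Nat.lt_ceilDiv_iff (hd : 0 < d) {m n : ℕ} : m < n ⌈/⌉ d ↔ d * m < n := by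
  rw [← not_le, ceilDiv_le_iff_le_smul hd, smul_eq_mul, not_le]

lemma sum_range_eq_sum_residues {M : Type*} [AddCommMonoid M] (hd : 0 < d) (u : ℕ → M)
    (n : ℕ) :
    ∑ i ∈ range n, u i = ∑ r ∈ range d, ∑ m ∈ range ((n - r) ⌈/⌉ d), u (r + d * m) := by
  rw [sum_sigma']
  refine sum_nbij' (fun i => ⟨i % d, i / d⟩) (fun p => p.1 + d * p.2) ?_ ?_ ?_ ?_ ?_
  · intro i hi
    have := Nat.mod_add_div i d
    simp only [mem_range, mem_sigma, Nat.lt_ceilDiv_iff hd] at hi ⊢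
    exact ⟨Nat.mod_lt i hd, by omega⟩
  · rintro ⟨r, m⟩ h
    simp only [mem_range, mem_sigma, Nat.lt_ceilDiv_iff hd] at h ⊢
    omega
  · intro i _
    exact Nat.mod_add_div i d
  · rintro ⟨r, m⟩ h
    simp only [mem_range, mem_sigma] at h
    simp [Nat.add_mul_div_left _ _ hd, Nat.mod_eq_of_lt h.1, Nat.div_eq_of_lt h.1]
  · intro i _
    rw [Nat.mod_add_div]

lemma abs_ceilDiv_div_sub_le {r n : ℕ} (hr : r < d) (hn : 0 < n) :
    |(((n - r) ⌈/⌉ d : ℕ) : ℝ) / n - 1 / d| ≤ 1 / n := by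
  have hd : 0 < d := by omega
  set c := (n - r) ⌈/⌉ d with hc
  have hlow : n ≤ d * c + d := by
    have : n - r ≤ d * c := le_smul_ceilDiv hd
    omega
  have hup : d * c ≤ n + d := by
    have := Nat.mul_div_le (n - r + d - 1) d
    rw [hc, Nat.ceilDiv_eq_add_pred_div]
    omega
  have hdR : (0 : ℝ) < d := by exact_mod_cast hd
  have hnR : (0 : ℝ) < n := by exact_mod_cast hn
  have hlowR : (n : ℝ) ≤ d * c + d := by exact_mod_cast hlow
  have hupR : (d * c : ℝ) ≤ n + d := by exact_mod_cast hup
  have hsub : (c : ℝ) / n - 1 / d = (d * c - n) / d / n := by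
    field_simp
  rw [hsub, abs_div, abs_of_pos hnR, div_le_div_iff_of_pos_right hnR, abs_div, abs_of_pos hdR,
    div_le_one hdR, abs_le]
  constructor <;> linarith

lemma tendsto_ceilDiv_div {r : ℕ} (hr : r < d) :
    Tendsto (fun n : ℕ => (((n - r) ⌈/⌉ d : ℕ) : ℝ) / n) atTop (𝓝 (1 / d)) := by
  rw [tendsto_iff_norm_sub_tendsto_zero]
  refine squeeze_zero' (Eventually.of_forall fun _ => norm_nonneg _) ?_
    tendsto_one_div_atTop_nhds_zero_nat
  filter_upwards [eventually_gt_atTop 0] with n hn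
  exact abs_ceilDiv_div_sub_le hr hn

lemma tendsto_ceilDiv_atTop (hd : 0 < d) (r : ℕ) :
    Tendsto (fun n : ℕ => (n - r) ⌈/⌉ d) atTop atTop :=
  tendsto_atTop_mono (fun n => floorDiv_le_ceilDiv (b := n - r) (a := d))
    ((Nat.tendsto_div_const_atTop hd.ne').comp (tendsto_sub_atTop_nat r))

theorem tendsto_average_of_tendsto_average_residues (hd : 0 < d) {u : ℕ → ℝ} {p : ℝ}
    (h : ∀ r < d, Tendsto (fun M : ℕ => (∑ m ∈ range M, u (r + d * m)) / M) atTop (𝓝 p)) :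
    Tendsto (fun n : ℕ => (∑ i ∈ range n, u i) / n) atTop (𝓝 p) := by
  have hsplit : ∀ n : ℕ, (∑ i ∈ range n, u i) / n = ∑ r ∈ range d,
      (((n - r) ⌈/⌉ d : ℕ) : ℝ) / n *
        ((∑ m ∈ range ((n - r) ⌈/⌉ d), u (r + d * m)) / ((n - r) ⌈/⌉ d : ℕ)) := by
    intro n
    rw [sum_range_eq_sum_residues hd, sum_div]
    refine sum_congr rfl fun r _ => ?_
    rcases eq_or_ne ((n - r) ⌈/⌉ d) 0 with h0 | h0
    · simp [h0]
    · field_simp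
  have hp : p = ∑ _r ∈ range d, 1 / (d : ℝ) * p := by
    have : (d : ℝ) ≠ 0 := by exact_mod_cast hd.ne'
    simp [field]
  simp_rw [hsplit]
  rw [hp]
  refine tendsto_finsetSum _ fun r hr => ?_
  have hr : r < d := mem_range.1 hr
  exact (tendsto_ceilDiv_div hr).mul ((h r hr).comp (tendsto_ceilDiv_atTop hd r))

end ResidueClasses

section InfiniteProduct

variable {Ω : Type*} [MeasurableSpace Ω] {ρ : Measure Ω} [IsProbabilityMeasure ρ]

lemma map_restrict_fin_infinitePi (n : ℕ) :
    (Measure.infinitePi fun _ : ℕ => ρ).map (fun w (i : Fin n) => w i) =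
      Measure.pi fun _ : Fin n => ρ := by
  rw [Measure.map_infinitePi_infinitePi_of_inj Fin.val_injective, Measure.infinitePi_eq_pi]

theorem eq_infinitePi_of_map_restrict_fin {μ : Measure (ℕ → Ω)}
    (hμ : ∀ n : ℕ, μ.map (fun w (i : Fin n) => w i) = Measure.pi fun _ : Fin n => ρ) :
    μ = Measure.infinitePi fun _ => ρ := by
  refine Measure.eq_infinitePi _ fun s t ht => ?_
  set n := s.sup id + 1
  have hproj : Measurable fun (w : ℕ → Ω) (i : Fin n) => w i := by fun_prop
  have hA : MeasurableSet (Set.pi {i : Fin n | (i : ℕ) ∈ s} fun i => t i) :=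
    .pi (Set.to_countable _) fun i _ => ht i
  have hpre : Set.pi s t = (fun (w : ℕ → Ω) (i : Fin n) => w i) ⁻¹'
      Set.pi {i : Fin n | (i : ℕ) ∈ s} fun i => t i := by
    ext w
    simp only [Set.mem_pi, SetLike.mem_coe, Set.mem_preimage]
    refine ⟨fun h i hi => h i hi, fun h i hi => h ⟨i, ?_⟩ hi⟩
    exact Nat.lt_succ_of_le (le_sup (f := id) hi)
  rw [← Measure.infinitePi_pi _ fun i _ => ht i, hpre, ← Measure.map_apply hproj hA,
    ← Measure.map_apply hproj hA, hμ, map_restrict_fin_infinitePi]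

def window (k i : ℕ) (w : ℕ → Ω) : Fin k → Ω := fun j => w (i + j)

variable {k : ℕ}

@[fun_prop]
lemma measurable_window (i : ℕ) : Measurable (window (Ω := Ω) k i) :=
  measurable_pi_lambda _ fun _ => measurable_pi_apply _

lemma map_window_infinitePi (i : ℕ) :
    (Measure.infinitePi fun _ => ρ).map (window k i) = Measure.pi fun _ : Fin k => ρ := by
  have hinj : Function.Injective fun j : Fin k => i + j := fun _ _ h => Fin.ext (by simpa using h)
  exact (Measure.map_infinitePi_infinitePi_of_inj hinj).trans (Measure.infinitePi_eq_pi _)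

lemma indepFun_window_window {i i' : ℕ} (h : i + k ≤ i') :
    IndepFun (window k i) (window k i') (Measure.infinitePi fun _ => ρ) := by
  have hdisj : Disjoint (Ico i (i + k)) (Ico i' (i' + k)) :=
    disjoint_left.2 fun a ha ha' => by simp only [mem_Ico] at ha ha'; omega
  have hblocks := (iIndepFun_infinitePi (P := fun _ : ℕ => ρ) (X := fun _ => id)
    fun _ => measurable_id).indepFun_finset _ _ hdisj fun _ => measurable_pi_apply _
  have hsub : ∀ {a : ℕ} (j : Fin k), a + j ∈ Ico a (a + k) := fun j => by simp
  exact hblocks.comp (φ := fun v (j : Fin k) => v ⟨i + j, hsub j⟩)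
    (ψ := fun v (j : Fin k) => v ⟨i' + j, hsub j⟩)
    (by fun_prop) (by fun_prop)

theorem ae_tendsto_average_window {g : (Fin k → Ω) → ℝ}
    (hg : Integrable g (Measure.pi fun _ => ρ)) :
    ∀ᵐ w ∂(Measure.infinitePi fun _ => ρ),
      Tendsto (fun n : ℕ => (∑ i ∈ range n, g (window k i w)) / n) atTop
        (𝓝 (∫ x, g x ∂Measure.pi fun _ => ρ)) := by
  set P := Measure.infinitePi fun _ : ℕ => ρ
  have hlaw := map_window_infinitePi (ρ := ρ) (k := k)
  have hgP : ∀ i, AEMeasurable g (P.map (window k i)) := fun i => by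
    rw [hlaw]
    exact hg.aemeasurable
  have hident : ∀ i i', IdentDistrib (fun w => g (window k i w)) (fun w => g (window k i' w)) P P :=
    fun i i' => (IdentDistrib.mk (measurable_window i).aemeasurable
      (measurable_window i').aemeasurable (by rw [hlaw, hlaw])).comp_of_aemeasurable (hgP i)
  have hindep : ∀ {i i'}, i + k ≤ i' →
      IndepFun (fun w => g (window k i w)) (fun w => g (window k i' w)) P := fun h =>
    (indepFun_window_window h).comp₀ (measurable_window _).aemeasurable
      (measurable_window _).aemeasurable (hgP _) (hgP _)
  have hres : ∀ r, ∀ᵐ w ∂P, Tendsto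
      (fun M : ℕ => (∑ m ∈ range M, g (window k (r + (k + 1) * m) w)) / M) atTop
        (𝓝 (∫ x, g x ∂Measure.pi fun _ => ρ)) := by
    intro r
    have hint : Integrable (fun w => g (window k (r + (k + 1) * 0) w)) P := by
      rw [← hlaw] at hg
      exact hg.comp_measurable (measurable_window _)
    have hmean : ∫ w, g (window k (r + (k + 1) * 0) w) ∂P = ∫ x, g x ∂Measure.pi fun _ => ρ := by
      rw [← hlaw (r + (k + 1) * 0), integral_map (measurable_window _).aemeasurable]
      rw [hlaw]
      exact hg.aestronglyMeasurable
    have hpair : Pairwise fun m m' => IndepFun (fun w => g (window k (r + (k + 1) * m) w))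
        (fun w => g (window k (r + (k + 1) * m') w)) P := by
      have hsep : ∀ {m m'}, m < m' → r + (k + 1) * m + k ≤ r + (k + 1) * m' := fun h => by
        have := Nat.mul_le_mul_left (k + 1) (Nat.succ_le_of_lt h)
        rw [Nat.mul_succ] at this
        omega
      intro m m' hne
      rcases hne.lt_or_gt with h | h
      · exact hindep (hsep h)
      · exact (hindep (hsep h)).symm
    simpa only [hmean] using strong_law_ae_real _ hint hpair fun m => hident _ _
  filter_upwards [ae_all_iff.2 hres] with w hw
  exact tendsto_average_of_tendsto_average_residues k.succ_pos fun r _ => hw r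

end InfiniteProduct

lemma ncard_window_match_eq_sum_indicator {Ω : Type*} {k : ℕ} (w : ℕ → Ω) (b : Fin k → Ω)
    (n : ℕ) :
    (({i | i < n ∧ ∀ j : Fin k, w (i + j) = b j} : Set ℕ).ncard : ℝ) =
      ∑ i ∈ range n, ({b} : Set (Fin k → Ω)).indicator (fun _ => 1) (window k i w) := by
  classical
  have hset : {i | i < n ∧ ∀ j : Fin k, w (i + j) = b j} = ↑{i ∈ range n | window k i w = b} := by
    ext i
    simp [window, funext_iff]
  rw [hset, Set.ncard_coe_finset, natCast_card_filter]
  simp [Set.indicator_apply]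

theorem normal_full_measure_general
    {Ω : Type*} [Countable Ω] [m : MeasurableSpace Ω] (hm : m = ⊤)
    (ρ : Measure Ω) [IsProbabilityMeasure ρ]
    (μ : Measure (ℕ → Ω))
    (hμ : ∀ n : ℕ, Measure.map (fun w (i : Fin n) => w (i : ℕ)) μ
        = Measure.pi (fun _ : Fin n => ρ)) :
    μ {w : ℕ → Ω | ∀ (k : ℕ) (b : Fin k → Ω), 1 ≤ k →
        Tendsto
          (fun n : ℕ =>
            (({i | i < n ∧ ∀ j : Fin k, w (i + j) = b j} : Set ℕ).ncard : ℝ) / n)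
          atTop (nhds (∏ j : Fin k, (ρ {b j}).toReal))} = 1 := by
  have : MeasurableSingletonClass Ω := ⟨fun _ => hm ▸ MeasurableSpace.measurableSet_top⟩
  obtain rfl := eq_infinitePi_of_map_restrict_fin hμ
  have hae : ∀ᵐ w ∂(Measure.infinitePi fun _ => ρ), ∀ (k : ℕ) (b : Fin k → Ω), 1 ≤ k →
      Tendsto (fun n : ℕ =>
          (({i | i < n ∧ ∀ j : Fin k, w (i + j) = b j} : Set ℕ).ncard : ℝ) / n)
        atTop (nhds (∏ j : Fin k, (ρ {b j}).toReal)) := by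
    refine ae_all_iff.2 fun k => ae_all_iff.2 fun b => ?_
    filter_upwards [ae_tendsto_average_window ((integrable_const (1 : ℝ)).indicator
      (measurableSet_singleton b))] with w hw _
    simpa [ncard_window_match_eq_sum_indicator, integral_indicator_one, measureReal_def,
      ENNReal.toReal_prod] using hw
  exact (measure_congr (ae_eq_univ.2 hae)).trans measure_univ

/-- Let `Ω` be a nonempty countable set equipped with the σ-algebra of all
subsets, let `ρ` be a probability measure on `Ω`, and let `μ = ⊗ρ` be the infinite product
measure on `Ω^ℕ` (characterized by its finite-dimensional marginals being the finite
product measures `ρ^n`).  Then the set of normal sequences, i.e. those `w` such that for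
every `k` and every word `b : Fin k → Ω` the relative frequency of (possibly overlapping)
occurrences of `b` among the first `n` positions of `w` converges to `∏ j, ρ {b j}`,
has `μ`-measure `1`. -/
theorem normal_full_measure
    {Ω : Type*} [Nonempty Ω] [Countable Ω] [m : MeasurableSpace Ω] (hm : m = ⊤)
    (ρ : Measure Ω) [IsProbabilityMeasure ρ]
    (μ : Measure (ℕ → Ω)) [IsProbabilityMeasure μ]
    (hμ : ∀ n : ℕ, Measure.map (fun w (i : Fin n) => w (i : ℕ)) μ
        = Measure.pi (fun _ : Fin n => ρ)) :
    μ {w : ℕ → Ω | ∀ (k : ℕ) (b : Fin k → Ω), 1 ≤ k →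
        Tendsto
          (fun n : ℕ =>
            (({i | i < n ∧ ∀ j : Fin k, w (i + j) = b j} : Set ℕ).ncard : ℝ) / n)
          atTop (nhds (∏ j : Fin k, (ρ {b j}).toReal))} = 1 :=
  normal_full_measure_general (m := m) hm ρ μ hμ
end

section
/- Let Ω = {0,1,…,9}, let Ψ : Ω^ℕ → ℝ be defined by Ψ((a_j)_{j≥1}) = Σ_{j=1}^∞ a_j·10^{-j}, and let 𝒞 be the family of cylinder sets C_{n,b} = {(a_j)_{j≥1} ∈ Ω^ℕ : a_n = b} for n ∈ ℕ and b ∈ Ω. Then the σ-algebra on [0,1] generated by the family of image sets {Ψ(C_{n,b}) : n ∈ ℕ, b ∈ Ω} is exactly the Borel σ-algebra of [0,1]. -/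
open MeasureTheory

/-- The map sending a sequence of decimal digits `(a_j)_{j ≥ 1}` to the real number
`∑_{j=1}^∞ a_j · 10^{-j} ∈ [0,1]`. -/
noncomputable def Psi : (ℕ → Fin 10) → ℝ :=
  fun a => ∑' j : ℕ, (a j : ℝ) / 10 ^ (j + 1)

/-!
The cylinder images are compact, hence Borel, and there are countably many of them. On the
standard Borel space `[0,1]` a countable family of Borel sets that separates points generates the
whole Borel σ-algebra (Lusin–Souslin: the identity is then a measurable embedding). So it suffices
to see that the digit sets `{a n | Ψ a = x}`, `n ∈ ℕ`, determine `x`. A number has one expansion,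
or exactly two, `0.d(c+1)000…` and `0.dc999…`; in both cases the digit sets recover them.
-/

theorem MeasurableSpace.generateFrom_eq_of_countable_of_separating {α : Type*}
    [m : MeasurableSpace α] [StandardBorelSpace α] {S : Set (Set α)} (hSc : S.Countable)
    (hSm : ∀ s ∈ S, MeasurableSet s) (hsep : ∀ x y, (∀ s ∈ S, x ∈ s ↔ y ∈ s) → x = y) :
    generateFrom S = m := by
  refine le_antisymm (generateFrom_le hSm) fun s hs => ?_
  have : @CountablyGenerated α (generateFrom S) :=
    @CountablyGenerated.mk _ (generateFrom S) ⟨S, hSc, rfl⟩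
  have : @SeparatesPoints α (generateFrom S) := (@separatesPoints_iff α (generateFrom S)).2
    fun x y h => hsep x y (forall_generateFrom_mem_iff_mem_iff.1 h)
  have hid : @MeasurableEmbedding α α m (generateFrom S) id :=
    @Measurable.measurableEmbedding α α (generateFrom S) id _ m _ (generateFrom_le hSm)
      Function.injective_id
  simpa using (@MeasurableEmbedding.measurableSet_image α α s m (generateFrom S) id hid).2 hs

namespace Real

variable {b : ℕ}

theorem ofDigits_eq_zero_iff {a : ℕ → Fin b} : ofDigits a = 0 ↔ ∀ i, (a i : ℕ) = 0 := by
  have hterm : ∀ i, ofDigitsTerm a i = 0 ↔ (a i : ℕ) = 0 := fun i => by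
    simp [ofDigitsTerm, (Fin.pos (a i)).ne']
  rw [ofDigits, ← summable_ofDigitsTerm.hasSum_iff,
    hasSum_zero_iff_of_nonneg fun _ => ofDigitsTerm_nonneg, funext_iff]
  exact forall_congr' hterm

theorem ofDigits_rev_add_ofDigits (hb : 1 < b) (a : ℕ → Fin b) :
    ofDigits (fun i => (a i).rev) + ofDigits a = 1 := by
  rw [← ofDigits_const_last_eq_one' hb, ofDigits, ofDigits, ofDigits,
    ← summable_ofDigitsTerm.tsum_add summable_ofDigitsTerm]
  refine tsum_congr fun i => ?_
  have hdigits : ((a i).rev : ℕ) + (a i : ℕ) = b - 1 := by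
    rw [Fin.val_rev]; have := (a i).isLt; omega
  simp only [ofDigitsTerm, ← add_mul]
  exact_mod_cast congrArg (fun n : ℕ => (n : ℝ) * ((b : ℝ) ^ (i + 1))⁻¹) hdigits

theorem ofDigits_eq_one_iff (hb : 1 < b) {a : ℕ → Fin b} :
    ofDigits a = 1 ↔ ∀ i, (a i : ℕ) = b - 1 := by
  have h := ofDigits_rev_add_ofDigits hb a
  rw [show ofDigits a = 1 ↔ ofDigits (fun i => (a i).rev) = 0 by constructor <;> intro <;> linarith,
    ofDigits_eq_zero_iff]
  refine forall_congr' fun i => ?_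
  rw [Fin.val_rev]
  have := (a i).isLt
  omega

/-- `u` and `v` are the two `b`-adic expansions `0.d(c+1)000…` and `0.dc(b-1)(b-1)…` of one
number, with the prefix `d` of length `N`. -/
def IsTwinAt (u v : ℕ → Fin b) (N : ℕ) : Prop :=
  (∀ m < N, u m = v m) ∧ (u N : ℕ) = v N + 1 ∧ ∀ m, N < m → (u m : ℕ) = 0 ∧ (v m : ℕ) = b - 1

theorem isTwinAt_of_ofDigits_eq (hb : 1 < b) {u v : ℕ → Fin b} {N : ℕ}
    (h : ofDigits u = ofDigits v) (hagree : ∀ m < N, u m = v m) (hlt : v N < u N) :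
    IsTwinAt u v N := by
  set tail : (ℕ → Fin b) → ℝ := fun a => ofDigits fun i => a (i + (N + 1))
  have hsplit : ∀ a : ℕ → Fin b, ofDigits a = ∑ i ∈ Finset.range N, ofDigitsTerm a i +
      ((a N : ℕ) + tail a) * ((b : ℝ) ^ (N + 1))⁻¹ := fun a => by
    rw [ofDigits_eq_sum_add_ofDigits a (N + 1), Finset.sum_range_succ, ofDigitsTerm]
    ring
  have hprefix : ∑ i ∈ Finset.range N, ofDigitsTerm u i = ∑ i ∈ Finset.range N, ofDigitsTerm v i :=
    Finset.sum_congr rfl fun i hi => by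
      rw [ofDigitsTerm, ofDigitsTerm, hagree i (Finset.mem_range.1 hi)]
  have hdigits : ((u N : ℕ) : ℝ) + tail u = (v N : ℕ) + tail v := by
    rw [hsplit u, hsplit v, hprefix] at h
    simpa [(Fin.pos (u N)).ne'] using h
  have hlt' : ((v N : ℕ) : ℝ) + 1 ≤ (u N : ℕ) := by exact_mod_cast hlt
  have htail_u : 0 ≤ tail u := ofDigits_nonneg _
  have htail_v : tail v ≤ 1 := ofDigits_le_one _
  have hu0 : tail u = 0 := by linarith
  have hv1 : tail v = 1 := by linarith
  refine ⟨hagree, by exact_mod_cast (by linarith : ((u N : ℕ) : ℝ) = (v N : ℕ) + 1), fun m hm => ?_⟩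
  have hm' : m - (N + 1) + (N + 1) = m := Nat.sub_add_cancel hm
  exact ⟨hm' ▸ ofDigits_eq_zero_iff.1 hu0 _, hm' ▸ (ofDigits_eq_one_iff hb).1 hv1 _⟩

theorem exists_isTwinAt_of_ofDigits_eq (hb : 1 < b) {u v : ℕ → Fin b}
    (h : ofDigits u = ofDigits v) (hne : u ≠ v) : ∃ N, IsTwinAt u v N ∨ IsTwinAt v u N := by
  rcases lt_trichotomy (toLex u) (toLex v) with ⟨N, hagree, hlt⟩ | heq | ⟨N, hagree, hlt⟩
  · exact ⟨N, .inr (isTwinAt_of_ofDigits_eq hb h.symm (fun m hm => (hagree m hm).symm) hlt)⟩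
  · exact absurd (toLex.injective heq) hne
  · exact ⟨N, .inl (isTwinAt_of_ofDigits_eq hb h (fun m hm => (hagree m hm).symm) hlt)⟩

theorem IsTwinAt.eq_or_eq (hb : 1 < b) {u v w : ℕ → Fin b} {N : ℕ} (ht : IsTwinAt u v N)
    (h : ofDigits w = ofDigits u) : w = u ∨ w = v := by
  obtain ⟨hagree, hN, htail⟩ := ht
  by_cases hwu : w = u
  · exact .inl hwu
  obtain ⟨K, ⟨-, -, htail'⟩ | ⟨hagree', hK, htail'⟩⟩ := exists_isTwinAt_of_ofDigits_eq hb h hwu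
  · -- `u` would end both in zeros and in the digit `b - 1`
    have h0 := (htail (max N K + 1) (by omega)).1
    have h9 := (htail' (max N K + 1) (by omega)).2
    omega
  · have hKN : K = N := by
      rcases lt_trichotomy K N with hlt | heq | hlt
      · have := (htail' N hlt).1; omega
      · exact heq
      · have := (htail K hlt).1; omega
    subst hKN
    refine .inr (funext fun m => ?_)
    rcases lt_trichotomy m K with hlt | rfl | hlt
    · rw [← hagree' m hlt, hagree m hlt]
    · exact Fin.ext (by omega)
    · exact Fin.ext (by rw [(htail' m hlt).2, (htail m hlt).2])

theorem IsTwinAt.ofDigits_preimage_eq (hb : 1 < b) {u v : ℕ → Fin b} {N : ℕ}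
    (ht : IsTwinAt u v N) (h : ofDigits v = ofDigits u) : ofDigits ⁻¹' {ofDigits u} = {u, v} :=
  Set.ext fun _ => ⟨fun hw => ht.eq_or_eq hb hw, by rintro (rfl | rfl); exacts [rfl, h]⟩

theorem exists_ofDigits_preimage_eq_pair (hb : 1 < b) {x : ℝ} (hx : x ∈ Set.Icc 0 1) :
    ∃ u v : ℕ → Fin b, (u = v ∨ ∃ N, IsTwinAt u v N) ∧ ofDigits ⁻¹' {x} = {u, v} := by
  obtain ⟨u, -, rfl⟩ := ofDigits_SurjOn hb hx
  by_cases huniq : ∀ w, ofDigits w = ofDigits u → w = u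
  · exact ⟨u, u, .inl rfl,
      Set.ext fun w => ⟨fun hw => .inl (huniq w hw), by rintro (rfl | rfl) <;> rfl⟩⟩
  push Not at huniq
  obtain ⟨w, hw, hwu⟩ := huniq
  obtain ⟨N, ht | ht⟩ := exists_isTwinAt_of_ofDigits_eq hb hw hwu
  · exact ⟨w, u, .inr ⟨N, ht⟩, hw ▸ ht.ofDigits_preimage_eq hb hw.symm⟩
  · exact ⟨u, w, .inr ⟨N, ht⟩, ht.ofDigits_preimage_eq hb hw⟩

theorem mem_ofDigits_image_cylinder_iff {x : ℝ} {u v : ℕ → Fin b} (hx : ofDigits ⁻¹' {x} = {u, v})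
    (n : ℕ) (d : Fin b) : x ∈ ofDigits '' {a | a n = d} ↔ d ∈ ({u n, v n} : Set (Fin b)) := by
  have hexp : ∀ a, ofDigits a = x ↔ a = u ∨ a = v := fun a => Set.ext_iff.1 hx a
  constructor
  · rintro ⟨a, rfl, hax⟩
    rcases (hexp a).1 hax with rfl | rfl
    exacts [.inl rfl, .inr rfl]
  · rintro (h | h)
    exacts [⟨u, h.symm, (hexp u).2 (.inl rfl)⟩, ⟨v, h.symm, (hexp v).2 (.inr rfl)⟩]

theorem eq_of_pair_digits_eq {u v u' v' : ℕ → Fin b} (hp : u = v ∨ ∃ N, IsTwinAt u v N)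
    (hp' : u' = v' ∨ ∃ N, IsTwinAt u' v' N)
    (h : ∀ n, ({u n, v n} : Set (Fin b)) = {u' n, v' n}) : u = u' := by
  have hsame : ∀ n, u n = v n ↔ u' n = v' n := fun n => by
    rcases Set.pair_eq_pair_iff.1 (h n) with ⟨h1, h2⟩ | ⟨h1, h2⟩ <;> grind
  have hdiag : ∀ n, u n = v n → u n = u' n := fun n hn => by
    rcases Set.pair_eq_pair_iff.1 (h n) with ⟨h1, h2⟩ | ⟨h1, h2⟩ <;> grind
  rcases hp with rfl | ⟨N, hagree, hN, htail⟩
  · exact funext fun n => hdiag n rfl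
  rcases hp' with rfl | ⟨N', hagree', hN', htail'⟩
  · exact funext fun n => hdiag n ((hsame n).2 rfl)
  have hne : ∀ {u v : ℕ → Fin b} {n : ℕ}, (u n : ℕ) = v n + 1 → u n ≠ v n :=
    fun h h' => by rw [h'] at h; omega
  obtain rfl : N = N' := le_antisymm
    (not_lt.1 fun hlt => hne hN' ((hsame N').1 (hagree N' hlt)))
    (not_lt.1 fun hlt => hne hN ((hsame N).2 (hagree' N hlt)))
  funext m
  rcases lt_trichotomy m N with hlt | rfl | hlt
  · exact hdiag m (hagree m hlt)
  · rcases Set.pair_eq_pair_iff.1 (h m) with ⟨h1, -⟩ | ⟨h1, h2⟩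
    · exact h1
    · rw [← Fin.val_eq_val] at h1 h2
      omega
  · exact Fin.ext (by rw [(htail m hlt).1, (htail' m hlt).1])

theorem eq_of_forall_mem_ofDigits_image_cylinder_iff (hb : 1 < b) {x y : ℝ}
    (hx : x ∈ Set.Icc 0 1) (hy : y ∈ Set.Icc 0 1)
    (h : ∀ n (d : Fin b), x ∈ ofDigits '' {a | a n = d} ↔ y ∈ ofDigits '' {a | a n = d}) :
    x = y := by
  obtain ⟨u, v, hp, hx'⟩ := exists_ofDigits_preimage_eq_pair hb hx
  obtain ⟨u', v', hp', hy'⟩ := exists_ofDigits_preimage_eq_pair hb hy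
  have huu' : u = u' := eq_of_pair_digits_eq hp hp' fun n => Set.ext fun d =>
    (mem_ofDigits_image_cylinder_iff hx' n d).symm.trans
      ((h n d).trans (mem_ofDigits_image_cylinder_iff hy' n d))
  have hu : ofDigits u = x := (hx'.symm ▸ Set.mem_insert u {v} : u ∈ ofDigits ⁻¹' {x})
  have hu' : ofDigits u' = y := (hy'.symm ▸ Set.mem_insert u' {v'} : u' ∈ ofDigits ⁻¹' {y})
  rw [← hu, ← hu', huu']

theorem isClosed_ofDigits_image_cylinder (n : ℕ) (d : Fin b) :
    IsClosed (ofDigits '' {a : ℕ → Fin b | a n = d}) :=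
  ((isClosed_singleton.preimage (continuous_apply n)).isCompact.image continuous_ofDigits).isClosed

end Real

theorem psi_eq_ofDigits : Psi = Real.ofDigits := by
  funext a
  simp only [Psi, Real.ofDigits, Real.ofDigitsTerm, div_eq_mul_inv]
  norm_num

/-- the σ-algebra on `[0,1]` generated by the images under `Ψ` of the
cylinder sets `C_{n,b} = {a : a_n = b}` is exactly the Borel σ-algebra of `[0,1]`,
i.e. the trace on `[0,1]` of the Borel σ-algebra of `ℝ`.  (Since `Ψ(C_{n,b}) ⊆ [0,1]`,
the image set is viewed as a subset of `[0,1]` via `Subtype.val ⁻¹'`.) -/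
theorem generateFrom_images_cylinders_eq_borel :
    MeasurableSpace.generateFrom
      {s : Set (Set.Icc (0 : ℝ) 1) | ∃ (n : ℕ) (b : Fin 10),
        s = Subtype.val ⁻¹' (Psi '' {a : ℕ → Fin 10 | a n = b})}
      = MeasurableSpace.comap Subtype.val (borel ℝ) := by
  rw [psi_eq_ofDigits]
  refine MeasurableSpace.generateFrom_eq_of_countable_of_separating ?_ ?_ ?_
  · exact (Set.countable_range fun p : ℕ × Fin 10 =>
      Subtype.val ⁻¹' (Real.ofDigits '' {a : ℕ → Fin 10 | a p.1 = p.2})).mono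
      (by rintro s ⟨n, d, rfl⟩; exact ⟨(n, d), rfl⟩)
  · rintro s ⟨n, d, rfl⟩
    exact measurable_subtype_coe (Real.isClosed_ofDigits_image_cylinder n d).measurableSet
  · exact fun x y h => Subtype.ext <| Real.eq_of_forall_mem_ofDigits_image_cylinder_iff
      (by norm_num) x.2 y.2 fun n d => h _ ⟨n, d, rfl⟩
end

section
/- Let Ω = {0,1,…,9}, let ρ be a probability measure on Ω with ρ({9}) < 1, let μ_ρ = ⊗ρ be the infinite product measure on Ω^ℕ, let Ψ : Ω^ℕ → ℝ be defined by Ψ((a_j)_{j≥1}) = Σ_{j=1}^∞ a_j·10^{-j}, and let λ_{μ_ρ} = Ψ_*(μ_ρ) be the pushforward measure on [0,1]. Let N_{μ_ρ} be the set of numbers η ∈ [0,1] that are normal with respect to λ_{μ_ρ}, i.e. η = Σ_{j=1}^∞ a_j·10^{-j} for a digit sequence (a_j)_{j≥1} with infinitely many a_j < 9 such that for every k ∈ ℕ and every word b_1…b_k of k digits, (1/n)·#{i ∈ {1,…,n} : a_{i+j-1} = b_j for all j = 1,…,k} converges to ∏_{j=1}^k ρ({b_j}) as n → ∞. Then λ_{μ_ρ}(N_{μ_ρ})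 = 1. -/
/-!
The hypothesis on the finite-dimensional marginals identifies `μ` with the infinite product
`infinitePi fun _ => ρ`. Fix a word `b` of length `k` and a residue `r < k`: the disjoint blocks
of length `k` starting at the positions `r + m * k` are i.i.d. with law `ρ^⊗k`, so by the strong
law of large numbers `b` occurs among them with limiting frequency `∏ j, ρ {b j}` almost surely.
Averaging over the `k` residues gives the same limit for the overlapping occurrences, and there
are only countably many words. Since `ρ {9} < 1`, some digit `d ≠ 9` has `ρ {d} > 0`, and its
positive frequency forces infinitely many digits `< 9`. As `Psi` is continuous, hence measurable,
the image of this full-measure set of sequences has full `Psi_* μ`-measure.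
-/

open MeasureTheory Filter

/-- The set of numbers `η ∈ [0,1]` that are normal with respect to `λ_{μ_ρ}`:
`η = ∑_{j=1}^∞ a_j 10^{-j}` for a digit sequence with infinitely many digits `< 9`,
such that for every `k ≥ 1` and every word `b : Fin k → Fin 10`, the frequency of
(possibly overlapping) occurrences of the word among the first `n` digits converges
to `∏ j, ρ {b j}`. -/
def NormalSet (ρ : Measure (Fin 10)) : Set ℝ :=
  {x : ℝ | ∃ a : ℕ → Fin 10,
    x = Psi a ∧ {j : ℕ | (a j : ℕ) < 9}.Infinite ∧
    ∀ (k : ℕ) (b : Fin k → Fin 10), 1 ≤ k →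
      Tendsto
        (fun n : ℕ =>
          (({i | i < n ∧ ∀ j : Fin k, a (i + j) = b j} : Set ℕ).ncard : ℝ) / n)
        atTop (nhds (∏ j : Fin k, (ρ {b j}).toReal))}

open Measure Topology ProbabilityTheory Finset Function

theorem Finset.sum_range_mul_eq_sum_residues {M : Type*} [AddCommMonoid M] (f : ℕ → M)
    (m k : ℕ) :
    ∑ i ∈ range (m * k), f i = ∑ r ∈ range k, ∑ j ∈ range m, f (r + j * k) := by
  induction m with
  | zero => simp
  | succ m ih =>
    rw [add_mul, one_mul, sum_range_add, ih, ← sum_add_distrib]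
    exact sum_congr rfl fun r _ => by rw [sum_range_succ, add_comm r]

theorem tendsto_card_filter_div_of_residues {P : ℕ → Prop} [DecidablePred P] {k : ℕ}
    (hk : 0 < k) {p : ℝ}
    (h : ∀ r < k,
      Tendsto (fun m : ℕ => (#{j ∈ range m | P (r + j * k)} : ℝ) / m) atTop (𝓝 p)) :
    Tendsto (fun n : ℕ => (#{i ∈ range n | P i} : ℝ) / n) atTop (𝓝 p) := by
  refine tendsto_div_of_monotone_of_exists_subseq_tendsto_div _ p
    (fun m n hmn => by gcongr) fun a ha => ⟨(· * k), ?_, ?_, ?_⟩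
  · filter_upwards [tendsto_natCast_atTop_atTop.eventually_ge_atTop (1 / (a - 1))] with m hm
    have : 1 ≤ (a - 1) * m := by rwa [div_le_iff₀' (by linarith)] at hm
    push_cast
    nlinarith [(Nat.cast_pos.2 hk : (0 : ℝ) < k)]
  · exact tendsto_id.atTop_mul_const' hk
  · have hsum := tendsto_finsetSum (range k) fun r hr => h r (mem_range.1 hr)
    have hk' : (k : ℝ) ≠ 0 := by positivity
    convert hsum.div_const (k : ℝ) using 1
    · ext m
      rw [card_filter, sum_range_mul_eq_sum_residues]
      simp only [← card_filter, Nat.cast_sum, ← sum_div, Nat.cast_mul, div_div]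
    · simp [hk']

theorem infinite_setOf_of_tendsto_ncard_div {Q : ℕ → Prop} {p : ℝ} (hp : 0 < p)
    (h : Tendsto (fun n : ℕ => ({i | i < n ∧ Q i}.ncard : ℝ) / n) atTop (𝓝 p)) :
    {i | Q i}.Infinite := by
  intro hfin
  have hzero : Tendsto (fun n : ℕ => ({i | Q i}.ncard : ℝ) / n) atTop (𝓝 0) :=
    tendsto_const_div_atTop_nhds_zero_nat _
  have hle (n : ℕ) : {i | i < n ∧ Q i}.ncard ≤ {i | Q i}.ncard :=
    Set.ncard_le_ncard (fun _ hi => hi.2) hfin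
  have : p ≤ 0 := le_of_tendsto_of_tendsto' h hzero fun n =>
    div_le_div_of_nonneg_right (mod_cast hle n) n.cast_nonneg
  linarith

theorem exists_ne_measure_singleton_pos {α : Type*} [MeasurableSpace α] [Countable α]
    [MeasurableSingletonClass α] {ρ : Measure α} [IsProbabilityMeasure ρ] {x : α}
    (hx : ρ {x} < 1) : ∃ y ≠ x, 0 < ρ {y} := by
  by_contra! h
  have hcompl : ρ {x}ᶜ = 0 := by
    rw [← Set.biUnion_of_singleton {x}ᶜ]
    exact (measure_biUnion_null_iff (Set.to_countable _)).2 fun y hy =>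
      nonpos_iff_eq_zero.1 (h y hy)
  exact hx.ne ((prob_compl_eq_zero_iff (measurableSet_singleton x)).1 hcompl)

section ProductMeasure

variable {α : Type*} [MeasurableSpace α]

def IsNormalSeq (ρ : Measure α) (a : ℕ → α) : Prop :=
  ∀ (k : ℕ) (b : Fin k → α), 1 ≤ k →
    Tendsto (fun n : ℕ => ({i | i < n ∧ ∀ j : Fin k, a (i + j) = b j}.ncard : ℝ) / n)
      atTop (𝓝 (∏ j, (ρ {b j}).toReal))

theorem IsNormalSeq.infinite_setOf_eq {ρ : Measure α} [IsFiniteMeasure ρ] {a : ℕ → α}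
    (ha : IsNormalSeq ρ a) {d : α} (hd : 0 < ρ {d}) : {i | a i = d}.Infinite := by
  have hpos : 0 < ∏ _j : Fin 1, (ρ {d}).toReal := by
    simpa using ENNReal.toReal_pos hd.ne' (measure_ne_top ρ _)
  refine (infinite_setOf_of_tendsto_ncard_div hpos (ha 1 (fun _ => d) le_rfl)).mono fun i hi => ?_
  simpa using hi 0

theorem eq_infinitePi_of_map_fin {ρ : Measure α} [IsProbabilityMeasure ρ]
    {μ : Measure (ℕ → α)}
    (hμ : ∀ n : ℕ, μ.map (fun w (i : Fin n) => w i) = Measure.pi fun _ => ρ) :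
    μ = infinitePi fun _ => ρ := by
  classical
  refine eq_infinitePi _ fun s t ht => ?_
  obtain ⟨n, hn⟩ := s.exists_nat_subset_range
  set T : Fin n → Set α := fun i => if (i : ℕ) ∈ s then t i else Set.univ
  have hpre : Set.pi s t = (fun w (i : Fin n) => w i) ⁻¹' Set.univ.pi T := by
    ext w
    simp only [Set.mem_pi, mem_coe, Set.mem_preimage, Set.mem_univ, true_imp_iff, T]
    refine ⟨fun h i => ?_, fun h i hi => by simpa [hi] using h ⟨i, mem_range.1 (hn hi)⟩⟩
    split_ifs with hi
    exacts [h i hi, trivial]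
  rw [hpre, ← Measure.map_apply (by fun_prop) (.univ_pi fun i => by
      simp only [T]; split_ifs; exacts [ht _, .univ]), hμ, Measure.pi_pi,
    Fin.prod_univ_eq_prod_range (fun i => ρ (if i ∈ s then t i else Set.univ))]
  simp only [apply_ite, measure_univ, prod_ite_mem, inter_eq_right.2 hn]

theorem map_infinitePi_blocks (ρ : Measure α) [IsProbabilityMeasure ρ] (k r : ℕ) :
    (infinitePi fun _ : ℕ => ρ).map (fun a (m : ℕ) (j : Fin k) => a (r + m * k + j)) =
      infinitePi fun _ : ℕ => Measure.pi fun _ : Fin k => ρ := by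
  have hinj : Function.Injective fun p : ℕ × Fin k => r + p.1 * k + p.2 := by
    rintro ⟨m, j⟩ ⟨m', j'⟩ h
    have hmk : (j : ℕ) + m * k = j' + m' * k := by simp only at h; omega
    have hdiv := congrArg (· / k) hmk
    have hmod := congrArg (· % k) hmk
    simp only [Nat.add_mul_div_right _ _ j.pos, Nat.div_eq_of_lt j.is_lt,
      Nat.div_eq_of_lt j'.is_lt, Nat.add_mul_mod_self_right, Nat.mod_eq_of_lt j.is_lt,
      Nat.mod_eq_of_lt j'.is_lt, zero_add] at hdiv hmod
    rw [hdiv, Fin.ext hmod]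
  have hcurry : (fun (a : ℕ → α) (m : ℕ) (j : Fin k) => a (r + m * k + j)) =
      MeasurableEquiv.curry ℕ (Fin k) α ∘ fun a (p : ℕ × Fin k) => a (r + p.1 * k + p.2) :=
    rfl
  rw [hcurry, ← Measure.map_map (by fun_prop) (by fun_prop),
    map_infinitePi_infinitePi_of_inj hinj, infinitePi_map_curry (fun _ _ => ρ)]
  simp_rw [infinitePi_eq_pi]

theorem ae_tendsto_card_filter_div_infinitePi {β : Type*} [MeasurableSpace β] (ν : Measure β)
    [IsProbabilityMeasure ν] {s : Set β} [DecidablePred (· ∈ s)] (hs : MeasurableSet s) :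
    ∀ᵐ ω ∂(infinitePi fun _ : ℕ => ν),
      Tendsto (fun n : ℕ => (#{i ∈ range n | ω i ∈ s} : ℝ) / n)
        atTop (𝓝 (ν.real s)) := by
  set P := infinitePi fun _ : ℕ => ν
  set X : ℕ → (ℕ → β) → ℝ := fun i ω => s.indicator 1 (ω i)
  have hmeas : Measurable (s.indicator (1 : β → ℝ)) := measurable_one.indicator hs
  have hindep : Pairwise ((· ⟂ᵢ[P] ·) on X) := fun i j hij =>
    (iIndepFun_infinitePi (P := fun _ => ν) fun _ => hmeas).indepFun hij
  have hident (i : ℕ) : IdentDistrib (X i) (X 0) P P :=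
    IdentDistrib.comp ⟨(measurable_pi_apply i).aemeasurable,
      (measurable_pi_apply 0).aemeasurable,
      (infinitePi_map_eval (fun _ => ν) i).trans (infinitePi_map_eval (fun _ => ν) 0).symm⟩
      hmeas
  have hint : Integrable (X 0) P :=
    ((integrable_const 1).indicator hs).comp_measurable (measurable_pi_apply 0)
  have hmean : P[X 0] = ν.real s := by
    rw [← integral_map (measurable_pi_apply 0).aemeasurable hmeas.aestronglyMeasurable,
      infinitePi_map_eval, integral_indicator_one hs]
  filter_upwards [strong_law_ae_real X hint hindep hident] with ω hω
  rw [hmean] at hω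
  convert hω using 3 with n
  simp only [X, Set.indicator_apply, Pi.one_apply, natCast_card_filter]

theorem ae_tendsto_ncard_occurrences_div_infinitePi [MeasurableSingletonClass α]
    (ρ : Measure α) [IsProbabilityMeasure ρ] {k : ℕ} (hk : 0 < k) (b : Fin k → α) :
    ∀ᵐ a ∂(infinitePi fun _ : ℕ => ρ), Tendsto
      (fun n : ℕ => ({i | i < n ∧ ∀ j : Fin k, a (i + j) = b j}.ncard : ℝ) / n)
      atTop (𝓝 (∏ j, (ρ {b j}).toReal)) := by
  classical
  have hclass (r : ℕ) : ∀ᵐ a ∂(infinitePi fun _ => ρ), Tendsto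
      (fun m : ℕ => (#{j ∈ range m | ∀ l : Fin k, a (r + j * k + l) = b l} : ℝ) / m)
      atTop (𝓝 (∏ j, (ρ {b j}).toReal)) := by
    have h := ae_tendsto_card_filter_div_infinitePi (Measure.pi fun _ : Fin k => ρ)
      (measurableSet_singleton b)
    rw [← map_infinitePi_blocks ρ k r] at h
    have hmeas : Measurable fun (a : ℕ → α) (m : ℕ) (j : Fin k) => a (r + m * k + j) :=
      measurable_pi_lambda _ fun m => measurable_pi_lambda _ fun j => measurable_pi_apply _
    have h2 := ae_of_ae_map hmeas.aemeasurable h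
    have hprod : (Measure.pi fun _ : Fin k => ρ).real {b} = ∏ j, (ρ {b j}).toReal := by
      simp [measureReal_def, ENNReal.toReal_prod]
    rw [hprod] at h2
    filter_upwards [h2] with a ha
    simpa only [Set.mem_singleton_iff, funext_iff] using ha
  filter_upwards [ae_all_iff.2 hclass] with a ha
  refine (tendsto_card_filter_div_of_residues (P := fun i => ∀ l : Fin k, a (i + l) = b l) hk
    fun r _ => ha r).congr fun n => ?_
  rw [← Set.ncard_coe_finset, coe_filter]
  simp only [mem_range]

theorem ae_isNormalSeq_infinitePi [Countable α] [MeasurableSingletonClass α]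
    (ρ : Measure α) [IsProbabilityMeasure ρ] :
    ∀ᵐ a ∂(infinitePi fun _ : ℕ => ρ), IsNormalSeq ρ a :=
  ae_all_iff.2 fun k => ae_all_iff.2 fun b => by
    rcases k.eq_zero_or_pos with rfl | hk
    · exact ae_of_all _ fun _ h => absurd h (by norm_num)
    · exact (ae_tendsto_ncard_occurrences_div_infinitePi ρ hk b).mono fun _ h _ => h

end ProductMeasure

theorem continuous_Psi : Continuous Psi := by
  refine continuous_tsum (u := fun j => 9 / 10 ^ (j + 1)) (fun j => by fun_prop) ?_ fun j a => ?_
  · simp only [div_eq_mul_inv, ← inv_pow]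
    exact (summable_geometric_of_lt_one (by norm_num) (by norm_num)).mul_left _
      |>.comp_injective (add_left_injective 1)
  · rw [Real.norm_eq_abs, abs_of_nonneg (by positivity)]
    gcongr
    exact_mod_cast Nat.le_of_lt_succ (a j).is_lt

theorem normalSet_measure_one_general
    (ρ : Measure (Fin 10)) [IsProbabilityMeasure ρ] (hρ : ρ {9} < 1)
    (μ : Measure (ℕ → Fin 10))
    (hμ : ∀ n : ℕ, Measure.map (fun w (i : Fin n) => w (i : ℕ)) μ
        = Measure.pi (fun _ : Fin n => ρ)) :
    Measure.map Psi μ (NormalSet ρ) = 1 := by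
  obtain rfl := eq_infinitePi_of_map_fin hμ
  obtain ⟨d, hd9, hd⟩ := exists_ne_measure_singleton_pos hρ
  have hnormal : Psi ⁻¹' NormalSet ρ ∈ ae (infinitePi fun _ => ρ) := by
    filter_upwards [ae_isNormalSeq_infinitePi ρ] with a ha
    refine ⟨a, rfl, (ha.infinite_setOf_eq hd).mono fun i (hi : a i = d) => ?_, ha⟩
    have : (d : ℕ) ≠ 9 := fun h => hd9 (Fin.ext h)
    show (a i : ℕ) < 9
    omega
  have hone : infinitePi (fun _ => ρ) (Psi ⁻¹' NormalSet ρ) = 1 := by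
    rw [measure_congr (ae_eq_univ.2 (mem_ae_iff.1 hnormal)), measure_univ]
  exact le_antisymm prob_le_one (hone ▸ le_map_apply continuous_Psi.measurable.aemeasurable _)

/-- if `ρ` is a probability measure on `Ω = {0,…,9}` with `ρ {9} < 1`,
`μ_ρ = ⊗ρ` is the infinite product measure on `Ω^ℕ` (characterized by its
finite-dimensional marginals) and `λ_{μ_ρ} = Ψ_*(μ_ρ)`, then the set of numbers in
`[0,1]` that are normal with respect to `λ_{μ_ρ}` has `λ_{μ_ρ}`-measure `1`. -/
theorem normalSet_measure_one
    (ρ : Measure (Fin 10)) [IsProbabilityMeasure ρ] (hρ : ρ {9} < 1)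
    (μ : Measure (ℕ → Fin 10)) [IsProbabilityMeasure μ]
    (hμ : ∀ n : ℕ, Measure.map (fun w (i : Fin n) => w (i : ℕ)) μ
        = Measure.pi (fun _ : Fin n => ρ)) :
    Measure.map Psi μ (NormalSet ρ) = 1 :=
  normalSet_measure_one_general ρ hρ μ hμ
end

section
/- Let Ω = {0,1,…,9}, let ρ be the probability measure on Ω with ρ({9}) = 1, let μ_ρ = ⊗ρ be the infinite product measure on Ω^ℕ, let Ψ : Ω^ℕ → ℝ be defined by Ψ((a_j)_{j≥1}) = Σ_{j=1}^∞ a_j·10^{-j}, and let λ_{μ_ρ} = Ψ_*(μ_ρ) be the pushforward measure on [0,1]. Let N_{μ_ρ} be the set of numbers η ∈ [0,1] that are normal with respect to λ_{μ_ρ}, i.e. η = Σ_{j=1}^∞ a_j·10^{-j} for a digit sequence (a_j)_{j≥1} with infinitely many a_j < 9 such that for every k ∈ ℕ and every word b_1…b_k of k digits, (1/n)·#{i ∈ {1,…,n} : a_{i+j-1} = b_j for all j = 1,…,k} converges to ∏_{j=1}^k ρ({b_j}) as n → ∞. Then λ_{μ_ρ}(N_{μ_ρ}) = 0. -/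
/-!
Since `ρ` is concentrated on the digit `9`, every finite-dimensional marginal of `μ` is
concentrated on the constant word `9 ⋯ 9`, so `μ`-almost every digit sequence is constantly `9`
and `Ψ_* μ` is the Dirac mass at `Ψ(9, 9, …) = 1`. But `1` is not normal: its admissible
expansion would need a digit `< 9`, which forces `Ψ a < 1`.
-/

open MeasureTheory Filter

lemma hasSum_nine_div_ten_pow : HasSum (fun j : ℕ => (9 : ℝ) / 10 ^ (j + 1)) 1 := by
  have h := (hasSum_geometric_of_lt_one (r := (1 / 10 : ℝ)) (by norm_num) (by norm_num)).mul_left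
    (9 / 10)
  have hterm : ∀ j : ℕ, (9 : ℝ) / 10 ^ (j + 1) = 9 / 10 * (1 / 10) ^ j := fun j => by
    rw [pow_succ, one_div_pow]
    field_simp
  rw [funext hterm]
  rwa [show (9 / 10 : ℝ) * (1 - 1 / 10)⁻¹ = 1 by norm_num] at h

lemma Psi_const_nine : Psi (fun _ => 9) = 1 := by
  simpa [Psi] using hasSum_nine_div_ten_pow.tsum_eq

lemma Psi_lt_one {a : ℕ → Fin 10} {j : ℕ} (hj : (a j : ℕ) < 9) : Psi a < 1 := by
  have hdigit : ∀ i, ((a i : ℕ) : ℝ) / 10 ^ (i + 1) ≤ 9 / 10 ^ (i + 1) := fun i => by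
    gcongr
    exact_mod_cast Nat.le_of_lt_succ (a i).is_lt
  have hsum : Summable fun i => ((a i : ℕ) : ℝ) / 10 ^ (i + 1) :=
    .of_nonneg_of_le (fun _ => by positivity) hdigit hasSum_nine_div_ten_pow.summable
  refine hasSum_lt (i := j) hdigit ?_ hsum.hasSum hasSum_nine_div_ten_pow
  gcongr
  exact_mod_cast hj

lemma one_notMem_normalSet (ρ : Measure (Fin 10)) : (1 : ℝ) ∉ NormalSet ρ := by
  rintro ⟨a, ha, hinf, -⟩
  obtain ⟨j, hj⟩ := hinf.nonempty
  exact (Psi_lt_one hj).ne ha.symm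

lemma ae_forall_apply_of_map_eq_pi {α : Type*} [MeasurableSpace α] {ρ : Measure α}
    [SigmaFinite ρ] {μ : Measure (ℕ → α)}
    (hμ : ∀ n : ℕ, μ.map (fun w (i : Fin n) => w i) = Measure.pi fun _ => ρ)
    {p : α → Prop} (hp : ∀ᵐ x ∂ρ, p x) : ∀ᵐ w ∂μ, ∀ i, p (w i) := by
  refine ae_all_iff.2 fun i => ?_
  have hmarg : ∀ᵐ v ∂μ.map (fun w (k : Fin (i + 1)) => w k), p (v (Fin.last i)) := by
    rw [hμ]
    exact Measure.tendsto_eval_ae_ae.eventually hp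
  exact ae_of_ae_map (measurable_pi_lambda _ fun k => measurable_pi_apply _).aemeasurable hmarg

/-- if `ρ` is a probability measure on `Ω = {0,…,9}` with `ρ {9} = 1`,
`μ_ρ = ⊗ρ` is the infinite product measure on `Ω^ℕ` (characterized by its
finite-dimensional marginals) and `λ_{μ_ρ} = Ψ_*(μ_ρ)`, then the set of numbers in
`[0,1]` that are normal with respect to `λ_{μ_ρ}` has `λ_{μ_ρ}`-measure `0`. -/
theorem normalSet_measure_zero
    (ρ : Measure (Fin 10)) [IsProbabilityMeasure ρ] (hρ : ρ {9} = 1)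
    (μ : Measure (ℕ → Fin 10)) [IsProbabilityMeasure μ]
    (hμ : ∀ n : ℕ, Measure.map (fun w (i : Fin n) => w (i : ℕ)) μ
        = Measure.pi (fun _ : Fin n => ρ)) :
    Measure.map Psi μ (NormalSet ρ) = 0 := by
  have hρ_ae : ∀ᵐ x ∂ρ, x ∈ ({9} : Set (Fin 10)) :=
    (mem_ae_iff_prob_eq_one (measurableSet_singleton 9)).2 hρ
  have hPsi : ∀ᵐ w ∂μ, Psi w = 1 := by
    filter_upwards [ae_forall_apply_of_map_eq_pi hμ hρ_ae] with w hw
    rw [show w = fun _ => 9 from funext hw, Psi_const_nine]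
  have hdirac : μ.map Psi = Measure.dirac 1 := by
    rw [Measure.map_congr hPsi, Measure.map_const, measure_univ, one_smul]
  rw [hdirac, Measure.dirac_apply, Set.indicator_of_notMem (one_notMem_normalSet ρ)]
end
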